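/- For every real number q > 1 (in particular for every prime power q), the sequences ν₊ and ν₋ defined by ν₊(k) := π_sym(k)·(1 − q^k/2) and ν₋(k) := π_sym(k)·(−q)^k lie in ℓ²(π_sym) and are eigenvectors of P_sym: for all l ≥ 0, ν₊(l−1)P_sym(l−1,l) + ν₊(l)P_sym(l,l) + ν₊(l+1)P_sym(l+1,l) = q^{−1}·ν₊(l) and ν₋(l−1)P_sym(l−1,l) + ν₋(l)P_sym(l,l) + ν₋(l+1)P_sym(l+1,l) = −q^{−1}·ν₋(l) (the l−1 terms being omitted when l = 0). -/

import Mathlib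

noncomputable section

/-- The tridiagonal transition matrix `P_sym` for the symmetric-matrix Markov chain. -/
def Psym (q : ℝ) (i j : ℕ) : ℝ :=
  if j = i + 1 then q⁻¹ ^ (i + 1)
  else if j = i then q⁻¹ ^ i - q⁻¹ ^ (i + 1)
  else if i = j + 1 then 1 - q⁻¹ ^ i
  else 0

/-- `α(q) = ∏_{i ≥ 1, i odd} (1 − q^{-i})`. -/
def alphaQ (q : ℝ) : ℝ := ∏' i : ℕ, (1 - q⁻¹ ^ (2 * i + 1))

/-- The stationary distribution `π_sym(k) = α(q)/∏_{i=1}^{k}(q^i − 1)`. -/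
def piSym (q : ℝ) (k : ℕ) : ℝ := alphaQ q / ∏ i ∈ Finset.range k, (q ^ (i + 1) - 1)

/-- `ν₊(k) = π_sym(k)·(1 − q^k/2)`. -/
def nuPlus (q : ℝ) (k : ℕ) : ℝ := piSym q k * (1 - q ^ k / 2)

/-- `ν₋(k) = π_sym(k)·(−q)^k`. -/
def nuMinus (q : ℝ) (k : ℕ) : ℝ := piSym q k * (-q) ^ k

/-!
Since `P_sym` is a birth–death chain, `π_sym` satisfies detailed balance
`π(k+1) P(k+1,k) = π(k) P(k,k+1)`, so `ν = π·f` is a left eigenvector of `P_sym` exactly when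
`f` is a right eigenvector with the same eigenvalue. The functions `f(k) = (−q)^k` and
`f(k) = 1 − q^k/2` are right eigenvectors for `−q⁻¹` and `q⁻¹` (the constant `1` has eigenvalue
`1` and `P(q^·)(l) = q^{l-1} + 2(1 − q⁻¹)`). Membership in `ℓ²(π)` means summability of
`π(k) f(k)^2 = α f(k)^2 / ∏_{i=1}^{k}(q^i − 1)`; the denominator grows faster than any
geometric sequence, so the ratio test applies.
-/

open Finset

lemma sq_mul_div_self {K : Type*} [Field K] (a b : K) : (a * b) ^ 2 / a = a * b ^ 2 := by
  rw [mul_pow, mul_div_right_comm, sq a, mul_self_div_self]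

section

variable {q : ℝ}

lemma pow_succ_sub_one_pos (hq : 1 < q) (i : ℕ) : 0 < q ^ (i + 1) - 1 :=
  sub_pos.mpr (one_lt_pow₀ hq i.succ_ne_zero)

lemma prod_range_pow_succ_sub_one_pos (hq : 1 < q) (k : ℕ) :
    0 < ∏ i ∈ range k, (q ^ (i + 1) - 1) :=
  prod_pos fun i _ => pow_succ_sub_one_pos hq i

lemma summable_pow_div_prod_range_pow_succ_sub_one (hq : 1 < q) (c : ℝ) :
    Summable fun k : ℕ => c ^ k / ∏ i ∈ range k, (q ^ (i + 1) - 1) := by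
  refine summable_of_ratio_norm_eventually_le (r := 1 / 2) (by norm_num) ?_
  filter_upwards [(tendsto_pow_atTop_atTop_of_one_lt hq).eventually_ge_atTop (2 * |c| + 1)]
    with n hn
  have hqn := pow_succ_sub_one_pos hq n
  rw [prod_range_succ, pow_succ, norm_div, norm_div, norm_mul, norm_mul,
    Real.norm_of_nonneg (prod_range_pow_succ_sub_one_pos hq n).le, Real.norm_of_nonneg hqn.le,
    Real.norm_eq_abs c, mul_div_mul_comm, mul_comm (1 / 2 : ℝ)]
  refine mul_le_mul_of_nonneg_left ?_
    (div_nonneg (norm_nonneg _) (prod_range_pow_succ_sub_one_pos hq n).le)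
  rw [div_le_iff₀ hqn]
  linarith [pow_le_pow_right₀ hq.le (Nat.le_add_right n 1)]

lemma summable_sq_div_piSym (hq : 1 < q) {c : ℝ} {g : ℕ → ℝ} (hg : ∀ k, g k ^ 2 ≤ c ^ k) :
    Summable fun k : ℕ => (piSym q k * g k) ^ 2 / piSym q k := by
  have hD := prod_range_pow_succ_sub_one_pos hq
  have h : ∀ k, (piSym q k * g k) ^ 2 / piSym q k
      = alphaQ q * (g k ^ 2 / ∏ i ∈ range k, (q ^ (i + 1) - 1)) := fun k => by
    rw [sq_mul_div_self, piSym, div_mul_eq_mul_div, mul_div_assoc]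
  simp_rw [h]
  exact .mul_left _ (.of_nonneg_of_le (fun k => div_nonneg (sq_nonneg _) (hD k).le)
    (fun k => div_le_div_of_nonneg_right (hg k) (hD k).le)
    (summable_pow_div_prod_range_pow_succ_sub_one hq c))

@[simp] lemma Psym_self_succ (q : ℝ) (i : ℕ) : Psym q i (i + 1) = q⁻¹ ^ (i + 1) := by
  simp [Psym]

@[simp] lemma Psym_self (q : ℝ) (i : ℕ) : Psym q i i = q⁻¹ ^ i - q⁻¹ ^ (i + 1) := by
  simp [Psym]

@[simp] lemma Psym_succ_self (q : ℝ) (i : ℕ) : Psym q (i + 1) i = 1 - q⁻¹ ^ (i + 1) := by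
  rw [Psym, if_neg (by omega), if_neg (by omega), if_pos rfl]

lemma piSym_succ (q : ℝ) (k : ℕ) : piSym q (k + 1) = piSym q k / (q ^ (k + 1) - 1) := by
  rw [piSym, piSym, prod_range_succ, div_div]

lemma piSym_succ_mul_Psym_succ_self (hq : 1 < q) (k : ℕ) :
    piSym q (k + 1) * Psym q (k + 1) k = piSym q k * Psym q k (k + 1) := by
  have := (pow_succ_sub_one_pos hq k).ne'
  have : q ≠ 0 := (zero_lt_one.trans hq).ne'
  rw [Psym_succ_self, Psym_self_succ, piSym_succ, inv_pow]
  field_simp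

lemma piSym_mul_left_eigen_of_right_eigen (hq : 1 < q) {f : ℕ → ℝ} {μ : ℝ}
    (hf : ∀ l, (if l = 0 then 0 else Psym q l (l - 1) * f (l - 1)) + Psym q l l * f l
      + Psym q l (l + 1) * f (l + 1) = μ * f l) (l : ℕ) :
    (if l = 0 then 0 else piSym q (l - 1) * f (l - 1) * Psym q (l - 1) l)
      + piSym q l * f l * Psym q l l + piSym q (l + 1) * f (l + 1) * Psym q (l + 1) l
      = μ * (piSym q l * f l) := by
  have hprev : (if l = 0 then 0 else piSym q (l - 1) * f (l - 1) * Psym q (l - 1) l)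
      = piSym q l * (if l = 0 then 0 else Psym q l (l - 1) * f (l - 1)) := by
    rcases l with _ | m
    · simp
    · simp only [Nat.add_sub_cancel, if_neg m.succ_ne_zero]
      linear_combination -f m * piSym_succ_mul_Psym_succ_self hq m
  have hnext : piSym q (l + 1) * f (l + 1) * Psym q (l + 1) l
      = piSym q l * (Psym q l (l + 1) * f (l + 1)) := by
    rw [mul_right_comm, piSym_succ_mul_Psym_succ_self hq]
    ring
  rw [hprev, hnext]
  linear_combination piSym q l * hf l

lemma Psym_right_eigen_neg_pow (hq : q ≠ 0) (l : ℕ) :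
    (if l = 0 then 0 else Psym q l (l - 1) * (-q) ^ (l - 1)) + Psym q l l * (-q) ^ l
      + Psym q l (l + 1) * (-q) ^ (l + 1) = -q⁻¹ * (-q) ^ l := by
  rcases l with _ | m
  · simp only [↓reduceIte, zero_add, Psym_self, Psym_self_succ, inv_pow]
    field_simp
    ring
  · simp only [Nat.add_sub_cancel, if_neg m.succ_ne_zero, Psym_succ_self, Psym_self,
      Psym_self_succ, inv_pow]
    field_simp
    ring

lemma Psym_right_eigen_one_sub_pow_div_two (hq : q ≠ 0) (l : ℕ) :
    (if l = 0 then 0 else Psym q l (l - 1) * (1 - q ^ (l - 1) / 2)) + Psym q l l * (1 - q ^ l / 2)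
      + Psym q l (l + 1) * (1 - q ^ (l + 1) / 2) = q⁻¹ * (1 - q ^ l / 2) := by
  rcases l with _ | m
  · simp only [↓reduceIte, zero_add, Psym_self, Psym_self_succ, inv_pow]
    field_simp
    ring
  · simp only [Nat.add_sub_cancel, if_neg m.succ_ne_zero, Psym_succ_self, Psym_self,
      Psym_self_succ, inv_pow]
    field_simp
    ring

end

/-- The sequences `ν₊` and `ν₋` lie in `ℓ²(π_sym)` and are eigenvectors of
`P_sym` with eigenvalues `q^{-1}` and `−q^{-1}` respectively. -/
theorem stmt19 (q : ℝ) (hq : 1 < q) :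
    Summable (fun k : ℕ => nuPlus q k ^ 2 / piSym q k) ∧
    Summable (fun k : ℕ => nuMinus q k ^ 2 / piSym q k) ∧
    (∀ l : ℕ,
      (if l = 0 then 0 else nuPlus q (l - 1) * Psym q (l - 1) l)
        + nuPlus q l * Psym q l l + nuPlus q (l + 1) * Psym q (l + 1) l
      = q⁻¹ * nuPlus q l) ∧
    (∀ l : ℕ,
      (if l = 0 then 0 else nuMinus q (l - 1) * Psym q (l - 1) l)
        + nuMinus q l * Psym q l l + nuMinus q (l + 1) * Psym q (l + 1) l
      = -q⁻¹ * nuMinus q l) := by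
  have hq0 : q ≠ 0 := (zero_lt_one.trans hq).ne'
  have hplus_sq (k : ℕ) : (1 - q ^ k / 2) ^ 2 ≤ (q ^ 2) ^ k := by
    have := one_le_pow₀ (n := k) hq.le
    rw [pow_right_comm]
    exact sq_le_sq' (by linarith) (by linarith)
  have hminus_sq (k : ℕ) : ((-q) ^ k) ^ 2 ≤ (q ^ 2) ^ k := by
    rw [pow_right_comm, neg_sq]
  exact ⟨summable_sq_div_piSym hq hplus_sq, summable_sq_div_piSym hq hminus_sq,
    piSym_mul_left_eigen_of_right_eigen hq (f := fun k => 1 - q ^ k / 2)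
      (Psym_right_eigen_one_sub_pow_div_two hq0),
    piSym_mul_left_eigen_of_right_eigen hq (f := fun k => (-q) ^ k) (Psym_right_eigen_neg_pow hq0)⟩
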